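/- arXiv:1902.04842 — 11 statements merged into one kernel-verified Lean document; each statement's English description precedes it below -/
import Mathlib

section
/- Let Δt ≥ 0, α ∈ [0,1] and S₀₁, S₁₀ ≥ 0 be real numbers, and let η₀ᵐ, η₁ᵐ be real numbers. If real numbers η₀, η₁ satisfy the implicit mass-transfer equations η₀ = η₀ᵐ − Δt·[(1−α)·η₀ᵐ + α·η₀]·S₀₁ + Δt·[(1−α)·η₁ᵐ + α·η₁]·S₁₀ and η₁ = η₁ᵐ − Δt·[(1−α)·η₁ᵐ + α·η₁]·S₁₀ + Δt·[(1−α)·η₀ᵐ + α·η₀]·S₀₁, then η₀ = (1−λ₀₁)·η₀ᵐ + λ₁₀·η₁ᵐ and η₁ = (1−λ₁₀)·η₁ᵐ + λ₀₁·η₀ᵐ, where λᵢⱼ := Δt·Sᵢⱼ/(1 + α·Δt·(S₀₁+S₁₀)). -/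
/-- The implicit mass-transfer equations can be solved explicitly:
the updated masses are convex-type combinations with coefficients
λᵢⱼ = Δt·Sᵢⱼ/(1 + α·Δt·(S01+S10)). -/
theorem mass_transfer_solution
    (Δt α S01 S10 η0m η1m η0 η1 : ℝ)
    (hΔt : 0 ≤ Δt) (hα0 : 0 ≤ α) (hα1 : α ≤ 1)
    (hS01 : 0 ≤ S01) (hS10 : 0 ≤ S10)
    (h0 : η0 = η0m - Δt * ((1 - α) * η0m + α * η0) * S01
              + Δt * ((1 - α) * η1m + α * η1) * S10)
    (h1 : η1 = η1m - Δt * ((1 - α) * η1m + α * η1) * S10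
              + Δt * ((1 - α) * η0m + α * η0) * S01) :
    η0 = (1 - Δt * S01 / (1 + α * Δt * (S01 + S10))) * η0m
        + (Δt * S10 / (1 + α * Δt * (S01 + S10))) * η1m ∧
    η1 = (1 - Δt * S10 / (1 + α * Δt * (S01 + S10))) * η1m
        + (Δt * S01 / (1 + α * Δt * (S01 + S10))) * η0m := by
  have hD : (1 + α * Δt * (S01 + S10)) ≠ 0 := by positivity
  constructor
  · field_simp
    linear_combination (1 + α * Δt * S10) * h0 + (α * Δt * S10) * h1
  · field_simp
    linear_combination (1 + α * Δt * S01) * h1 + (α * Δt * S01) * h0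
end

section
/- Let V be a real vector space, let α ∈ [0,1], and let A₁₀, A₀₁ ≥ 0 be real numbers. Let φ₀ᵐ, φ₁ᵐ ∈ V. If φ₀, φ₁ ∈ V satisfy the implicit property-transfer equations φ₀ = φ₀ᵐ − (1−α)·A₁₀·(φ₀ᵐ − φ₁ᵐ) − α·A₁₀·(φ₀ − φ₁) and φ₁ = φ₁ᵐ − (1−α)·A₀₁·(φ₁ᵐ − φ₀ᵐ) − α·A₀₁·(φ₁ − φ₀), then φ₀ = (1−ν₁₀)·φ₀ᵐ + ν₁₀·φ₁ᵐ and φ₁ = (1−ν₀₁)·φ₁ᵐ + ν₀₁·φ₀ᵐ, where νⱼᵢ := Aⱼᵢ/(1 + α·(A₁₀ + A₀₁)). -/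
/-- The implicit Method-1 property-transfer equations can be solved
explicitly: the updated properties are combinations of the old values with
coefficients νⱼᵢ = Aⱼᵢ/(1 + α·(A₁₀ + A₀₁)). -/
theorem method1_property_transfer_solution
    {V : Type*} [AddCommGroup V] [Module ℝ V]
    (α A10 A01 : ℝ) (hα0 : 0 ≤ α) (hα1 : α ≤ 1)
    (hA10 : 0 ≤ A10) (hA01 : 0 ≤ A01)
    (φ0m φ1m φ0 φ1 : V)
    (h0 : φ0 = φ0m - ((1 - α) * A10) • (φ0m - φ1m) - (α * A10) • (φ0 - φ1))
    (h1 : φ1 = φ1m - ((1 - α) * A01) • (φ1m - φ0m) - (α * A01) • (φ1 - φ0)) :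
    φ0 = (1 - A10 / (1 + α * (A10 + A01))) • φ0m
        + (A10 / (1 + α * (A10 + A01))) • φ1m ∧
    φ1 = (1 - A01 / (1 + α * (A10 + A01))) • φ1m
        + (A01 / (1 + α * (A10 + A01))) • φ0m := by
  have hD : (1 + α * (A10 + A01)) ≠ 0 := by positivity
  constructor
  · linear_combination (norm := match_scalars <;> field_simp <;> ring)
      ((1 + α * A01) / (1 + α * (A10 + A01))) • h0
      + ((α * A10) / (1 + α * (A10 + A01))) • h1
  · linear_combination (norm := match_scalars <;> field_simp <;> ring)
      ((α * A01) / (1 + α * (A10 + A01))) • h0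
      + ((1 + α * A10) / (1 + α * (A10 + A01))) • h1
end

section
/- (Scheme 1 conserves momentum and internal energy.) Let V be a real vector space, Δt ≥ 0, S₀₁, S₁₀ ≥ 0, and let η₀, η₁ > 0 be real numbers with φ₀, φ₁ ∈ V. Define the explicit mass update η₀' = η₀ − Δt·S₀₁·η₀ + Δt·S₁₀·η₁ and η₁' = η₁ − Δt·S₁₀·η₁ + Δt·S₀₁·η₀, and assume η₀' > 0 and η₁' > 0. Define φ₀' = (1−ν₁₀)·φ₀ + ν₁₀·φ₁ and φ₁' = (1−ν₀₁)·φ₁ + ν₀₁·φ₀ with ν₁₀ = Δt·S₁₀·η₁/η₀' and ν₀₁ = Δt·S₀₁·η₀/η₁'. Then η₀'·φ₀' + η₁'·φ₁' = η₀·φ₀ + η₁·φ₁. -/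
/-- Scheme 1 (α_C = 0, α_A = 0, q = m, r = n+1) conserves momentum and
internal energy: the total η·φ is unchanged by the transfer. -/
theorem scheme1_conserves
    {V : Type*} [AddCommGroup V] [Module ℝ V]
    (Δt S01 S10 η0 η1 : ℝ) (φ0 φ1 : V)
    (hΔt : 0 ≤ Δt) (hS01 : 0 ≤ S01) (hS10 : 0 ≤ S10)
    (hη0 : 0 < η0) (hη1 : 0 < η1)
    (η0' η1' : ℝ)
    (hη0' : η0' = η0 - Δt * S01 * η0 + Δt * S10 * η1)
    (hη1' : η1' = η1 - Δt * S10 * η1 + Δt * S01 * η0)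
    (hη0'pos : 0 < η0') (hη1'pos : 0 < η1')
    (ν10 ν01 : ℝ)
    (hν10 : ν10 = Δt * S10 * η1 / η0')
    (hν01 : ν01 = Δt * S01 * η0 / η1')
    (φ0' φ1' : V)
    (hφ0' : φ0' = (1 - ν10) • φ0 + ν10 • φ1)
    (hφ1' : φ1' = (1 - ν01) • φ1 + ν01 • φ0) :
    η0' • φ0' + η1' • φ1' = η0 • φ0 + η1 • φ1 := by
  have h0 : η0' * ν10 = Δt * S10 * η1 := by
    rw [hν10]; field_simp
  have h1 : η1' * ν01 = Δt * S01 * η0 := by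
    rw [hν01]; field_simp
  have c0 : η0' * (1 - ν10) + η1' * ν01 = η0 := by
    rw [mul_sub, mul_one, h0, h1, hη0']; ring
  have c1 : η1' * (1 - ν01) + η0' * ν10 = η1 := by
    rw [mul_sub, mul_one, h0, h1, hη1']; ring
  rw [hφ0', hφ1', smul_add, smul_add, smul_smul, smul_smul, smul_smul, smul_smul,
    ← c0, ← c1]
  module
end

section
/- (Scheme 2 conserves momentum and internal energy.) Let V be a real vector space, Δt ≥ 0, S₀₁, S₁₀ ≥ 0, and let η₀, η₁ > 0 be real numbers with φ₀, φ₁ ∈ V. Define the explicit mass update η₀' = η₀ − Δt·S₀₁·η₀ + Δt·S₁₀·η₁ and η₁' = η₁ − Δt·S₁₀·η₁ + Δt·S₀₁·η₀. Let D = 1 + Δt·(S₁₀·η₁/η₀ + S₀₁·η₀/η₁) and define φ₀' = (1−ν₁₀)·φ₀ + ν₁₀·φ₁ and φ₁' = (1−ν₀₁)·φ₁ + ν₀₁·φ₀ with ν₁₀ = (Δt·S₁₀·η₁/η₀)/D and ν₀₁ = (Δt·S₀₁·η₀/η₁)/D. Then η₀'·φ₀' + η₁'·φ₁' = η₀·φ₀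 + η₁·φ₁. -/
/-- Scheme 2 (α_C = 0, α_A = 1, q = m, r = m) conserves momentum and
internal energy: the total η·φ is unchanged by the transfer. -/
theorem scheme2_conserves
    {V : Type*} [AddCommGroup V] [Module ℝ V]
    (Δt S01 S10 η0 η1 : ℝ) (φ0 φ1 : V)
    (hΔt : 0 ≤ Δt) (hS01 : 0 ≤ S01) (hS10 : 0 ≤ S10)
    (hη0 : 0 < η0) (hη1 : 0 < η1)
    (η0' η1' : ℝ)
    (hη0' : η0' = η0 - Δt * S01 * η0 + Δt * S10 * η1)
    (hη1' : η1' = η1 - Δt * S10 * η1 + Δt * S01 * η0)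
    (D : ℝ)
    (hD : D = 1 + Δt * (S10 * η1 / η0 + S01 * η0 / η1))
    (ν10 ν01 : ℝ)
    (hν10 : ν10 = (Δt * S10 * η1 / η0) / D)
    (hν01 : ν01 = (Δt * S01 * η0 / η1) / D)
    (φ0' φ1' : V)
    (hφ0' : φ0' = (1 - ν10) • φ0 + ν10 • φ1)
    (hφ1' : φ1' = (1 - ν01) • φ1 + ν01 • φ0) :
    η0' • φ0' + η1' • φ1' = η0 • φ0 + η1 • φ1 := by
  have hDpos : 0 < D := by
    rw [hD]
    have : 0 ≤ Δt * (S10 * η1 / η0 + S01 * η0 / η1) := by positivity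
    linarith
  have hD0 : D ≠ 0 := ne_of_gt hDpos
  have key0 : η0' * (1 - ν10) + η1' * ν01 = η0 := by
    subst hη0' hη1' hν10 hν01 hD
    field_simp
    ring
  have key1 : η0' * ν10 + η1' * (1 - ν01) = η1 := by
    subst hη0' hη1' hν10 hν01 hD
    field_simp
    ring
  calc η0' • φ0' + η1' • φ1'
      = (η0' * (1 - ν10) + η1' * ν01) • φ0
        + (η0' * ν10 + η1' * (1 - ν01)) • φ1 := by
        rw [hφ0', hφ1']
        simp only [smul_add, smul_smul, add_smul]
        abel
    _ = η0 • φ0 + η1 • φ1 := by rw [key0, key1]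
end

section
/- (Scheme 3 conserves momentum and internal energy.) Let V be a real vector space, Δt ≥ 0, S₀₁, S₁₀ ≥ 0, and let η₀, η₁ > 0 be real numbers with φ₀, φ₁ ∈ V. Define λᵢⱼ = Δt·Sᵢⱼ/(1 + Δt·(S₀₁+S₁₀)) and the implicit mass update η₀' = (1−λ₀₁)·η₀ + λ₁₀·η₁ and η₁' = (1−λ₁₀)·η₁ + λ₀₁·η₀, and assume η₀' > 0 and η₁' > 0. Define φ₀' = (1−ν₁₀)·φ₀ + ν₁₀·φ₁ and φ₁' = (1−ν₀₁)·φ₁ + ν₀₁·φ₀ with ν₁₀ = Δt·S₁₀·η₁'/η₀' and ν₀₁ = Δt·S₀₁·η₀'/η₁'. Then η₀'·φ₀' + η₁'·φ₁' = η₀·φ₀ + η₁·φ₁. -/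
/-- Scheme 3 (α_C = 1, α_A = 0, q = n+1, r = n+1) conserves momentum and
internal energy: the total η·φ is unchanged by the transfer. -/
theorem scheme3_conserves
    {V : Type*} [AddCommGroup V] [Module ℝ V]
    (Δt S01 S10 η0 η1 : ℝ) (φ0 φ1 : V)
    (hΔt : 0 ≤ Δt) (hS01 : 0 ≤ S01) (hS10 : 0 ≤ S10)
    (hη0 : 0 < η0) (hη1 : 0 < η1)
    (lam01 lam10 : ℝ)
    (hlam01 : lam01 = Δt * S01 / (1 + Δt * (S01 + S10)))
    (hlam10 : lam10 = Δt * S10 / (1 + Δt * (S01 + S10)))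
    (η0' η1' : ℝ)
    (hη0' : η0' = (1 - lam01) * η0 + lam10 * η1)
    (hη1' : η1' = (1 - lam10) * η1 + lam01 * η0)
    (hη0'pos : 0 < η0') (hη1'pos : 0 < η1')
    (ν10 ν01 : ℝ)
    (hν10 : ν10 = Δt * S10 * η1' / η0')
    (hν01 : ν01 = Δt * S01 * η0' / η1')
    (φ0' φ1' : V)
    (hφ0' : φ0' = (1 - ν10) • φ0 + ν10 • φ1)
    (hφ1' : φ1' = (1 - ν01) • φ1 + ν01 • φ0) :
    η0' • φ0' + η1' • φ1' = η0 • φ0 + η1 • φ1 := by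
  have hD : 0 < 1 + Δt * (S01 + S10) := by positivity
  have hDne : (1 + Δt * (S01 + S10)) ≠ 0 := hD.ne'
  have c01 : lam01 * (1 + Δt * (S01 + S10)) = Δt * S01 := by
    rw [hlam01]; exact div_mul_cancel₀ _ hDne
  have c10 : lam10 * (1 + Δt * (S01 + S10)) = Δt * S10 := by
    rw [hlam10]; exact div_mul_cancel₀ _ hDne
  have e0 : η0' * (1 + Δt * (S01 + S10)) = η0 + Δt * S10 * (η0 + η1) := by
    rw [hη0']; linear_combination (-η0) * c01 + η1 * c10
  have e1 : η1' * (1 + Δt * (S01 + S10)) = η1 + Δt * S01 * (η0 + η1) := by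
    rw [hη1']; linear_combination (-η1) * c10 + η0 * c01
  have h0' : η0' + Δt * S01 * η0' - Δt * S10 * η1' = η0 := by
    apply mul_right_cancel₀ hDne
    linear_combination (1 + Δt * S01) * e0 - Δt * S10 * e1
  have h1' : η1' + Δt * S10 * η1' - Δt * S01 * η0' = η1 := by
    apply mul_right_cancel₀ hDne
    linear_combination (1 + Δt * S10) * e1 - Δt * S01 * e0
  have key0 : η0' * ν10 = Δt * S10 * η1' := by
    rw [hν10, mul_div_assoc']; exact mul_div_cancel_left₀ _ hη0'pos.ne'
  have key1 : η1' * ν01 = Δt * S01 * η0' := by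
    rw [hν01, mul_div_assoc']; exact mul_div_cancel_left₀ _ hη1'pos.ne'
  have h0 : η0' * (1 - ν10) + η1' * ν01 = η0 := by
    linear_combination h0' - key0 + key1
  have h1 : η1' * (1 - ν01) + η0' * ν10 = η1 := by
    linear_combination h1' - key1 + key0
  rw [hφ0', hφ1', smul_add, smul_add, smul_smul, smul_smul, smul_smul, smul_smul,
    ← h0, ← h1, add_smul, add_smul]
  abel
end

section
/- (Scheme 4 conserves momentum and internal energy.) Let V be a real vector space, Δt ≥ 0, S₀₁, S₁₀ ≥ 0, and let η₀, η₁ > 0 be real numbers with φ₀, φ₁ ∈ V. Define λᵢⱼ = Δt·Sᵢⱼ/(1 + Δt·(S₀₁+S₁₀)) and the implicit mass update η₀' = (1−λ₀₁)·η₀ + λ₁₀·η₁ and η₁' = (1−λ₁₀)·η₁ + λ₀₁·η₀. Let D = 1 + Δt·(S₁₀·η₁'/η₀ + S₀₁·η₀'/η₁) and define φ₀' = (1−ν₁₀)·φ₀ + ν₁₀·φ₁ and φ₁' = (1−ν₀₁)·φ₁ + ν₀₁·φ₀ with ν₁₀ = (Δt·S₁₀·η₁'/η₀)/D and ν₀₁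 = (Δt·S₀₁·η₀'/η₁)/D. Then η₀'·φ₀' + η₁'·φ₁' = η₀·φ₀ + η₁·φ₁. -/
/-!
The implicit mass update is backward Euler: `η₀' = η₀ + F` and `η₁' = η₁ - F` with net flux
`F = a - b`, where `a = Δt S₁₀ η₁'` and `b = Δt S₀₁ η₀'`. In `η₀' φ₀' + η₁' φ₁'` the coefficients
of `φ₀` and `φ₁` are `η₀' - G` and `η₁' + G` with `G = η₀' ν₁₀ - η₁' ν₀₁`, so the totals are
conserved as soon as `G = F`. Writing `η₀' = η₀ + a - b` and `η₁' = η₁ - a + b` gives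
`η₀' a / η₀ - η₁' b / η₁ = (a - b) (1 + a / η₀ + b / η₁) = (a - b) D`,
which is why the denominator `D` of scheme 4 makes the two fluxes agree.
-/

theorem implicit_mass_update_eq_backward_euler {Δt S01 S10 η0 η1 η0' η1' : ℝ}
    (hE : 1 + Δt * (S01 + S10) ≠ 0)
    (hη0' : η0' = (1 - Δt * S01 / (1 + Δt * (S01 + S10))) * η0
      + Δt * S10 / (1 + Δt * (S01 + S10)) * η1)
    (hη1' : η1' = (1 - Δt * S10 / (1 + Δt * (S01 + S10))) * η1
      + Δt * S01 / (1 + Δt * (S01 + S10)) * η0) :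
    η0' = η0 + (Δt * S10 * η1' - Δt * S01 * η0') ∧
      η1' = η1 - (Δt * S10 * η1' - Δt * S01 * η0') := by
  subst hη0' hη1'
  constructor <;> field_simp <;> ring

theorem implicit_mass_update_pos {Δt S01 S10 η0 η1 : ℝ}
    (hΔt : 0 ≤ Δt) (hS01 : 0 ≤ S01) (hS10 : 0 ≤ S10) (hη0 : 0 < η0) (hη1 : 0 ≤ η1) :
    0 < (1 - Δt * S01 / (1 + Δt * (S01 + S10))) * η0 + Δt * S10 / (1 + Δt * (S01 + S10)) * η1 := by
  have hE : 0 < 1 + Δt * (S01 + S10) := by positivity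
  have closed_form : (1 - Δt * S01 / (1 + Δt * (S01 + S10))) * η0
      + Δt * S10 / (1 + Δt * (S01 + S10)) * η1
      = ((1 + Δt * S10) * η0 + Δt * S10 * η1) / (1 + Δt * (S01 + S10)) := by
    field_simp
    ring
  rw [closed_form]
  positivity

theorem mul_div_sub_mul_div_eq_flux {η0 η1 η0' η1' a b D : ℝ} (hη0 : η0 ≠ 0) (hη1 : η1 ≠ 0)
    (hη0' : η0' = η0 + (a - b)) (hη1' : η1' = η1 - (a - b))
    (hD : D = 1 + a / η0 + b / η1) (hD0 : D ≠ 0) :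
    η0' * (a / η0 / D) - η1' * (b / η1 / D) = a - b := by
  have factor : η0' * (a / η0) - η1' * (b / η1) = (a - b) * D := by
    subst hη0' hη1' hD
    field_simp
    ring
  calc η0' * (a / η0 / D) - η1' * (b / η1 / D) = (η0' * (a / η0) - η1' * (b / η1)) / D := by ring
    _ = a - b := by rw [factor, mul_div_cancel_right₀ _ hD0]

section PropertyTransfer

variable {V : Type*} [AddCommGroup V] [Module ℝ V]

theorem smul_mix_add_smul_mix_eq_of_flux {η0 η1 η0' η1' ν10 ν01 F : ℝ} (φ0 φ1 : V)
    (hη0' : η0' = η0 + F) (hη1' : η1' = η1 - F) (hF : η0' * ν10 - η1' * ν01 = F) :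
    η0' • ((1 - ν10) • φ0 + ν10 • φ1) + η1' • ((1 - ν01) • φ1 + ν01 • φ0)
      = η0 • φ0 + η1 • φ1 := by
  have coeff0 : η0' * (1 - ν10) + η1' * ν01 = η0 := by linear_combination hη0' - hF
  have coeff1 : η0' * ν10 + η1' * (1 - ν01) = η1 := by linear_combination hη1' + hF
  rw [← coeff0, ← coeff1]
  simp only [smul_add, smul_smul, add_smul]
  abel

end PropertyTransfer

/-- Scheme 4 (α_C = 1, α_A = 1, q = n+1, r = m) conserves momentum and
internal energy: the total η·φ is unchanged by the transfer. -/
theorem scheme4_conserves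
    {V : Type*} [AddCommGroup V] [Module ℝ V]
    (Δt S01 S10 η0 η1 : ℝ) (φ0 φ1 : V)
    (hΔt : 0 ≤ Δt) (hS01 : 0 ≤ S01) (hS10 : 0 ≤ S10)
    (hη0 : 0 < η0) (hη1 : 0 < η1)
    (lam01 lam10 : ℝ)
    (hlam01 : lam01 = Δt * S01 / (1 + Δt * (S01 + S10)))
    (hlam10 : lam10 = Δt * S10 / (1 + Δt * (S01 + S10)))
    (η0' η1' : ℝ)
    (hη0' : η0' = (1 - lam01) * η0 + lam10 * η1)
    (hη1' : η1' = (1 - lam10) * η1 + lam01 * η0)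
    (D : ℝ)
    (hD : D = 1 + Δt * (S10 * η1' / η0 + S01 * η0' / η1))
    (ν10 ν01 : ℝ)
    (hν10 : ν10 = (Δt * S10 * η1' / η0) / D)
    (hν01 : ν01 = (Δt * S01 * η0' / η1) / D)
    (φ0' φ1' : V)
    (hφ0' : φ0' = (1 - ν10) • φ0 + ν10 • φ1)
    (hφ1' : φ1' = (1 - ν01) • φ1 + ν01 • φ0) :
    η0' • φ0' + η1' • φ1' = η0 • φ0 + η1 • φ1 := by
  subst hlam01 hlam10
  obtain ⟨hη0'_flux, hη1'_flux⟩ :=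
    implicit_mass_update_eq_backward_euler (by positivity) hη0' hη1'
  have hη0'_pos : 0 < η0' := hη0' ▸ implicit_mass_update_pos hΔt hS01 hS10 hη0 hη1.le
  have hη1'_pos : 0 < η1' := by
    rw [hη1', add_comm S01 S10]
    exact implicit_mass_update_pos hΔt hS10 hS01 hη1 hη0.le
  have hD_pos : 0 < D := by rw [hD]; positivity
  have hflux := mul_div_sub_mul_div_eq_flux hη0.ne' hη1.ne' hη0'_flux hη1'_flux
    (by rw [hD]; ring) hD_pos.ne'
  rw [← hν10, ← hν01] at hflux
  subst hφ0' hφ1'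
  exact smul_mix_add_smul_mix_eq_of_flux φ0 φ1 hη0'_flux hη1'_flux hflux
end

section
/- Let α ∈ [0,1) and x > 0 be real numbers, and consider the worst case Sⱼᵢ = 0 so that the Method-1 transfer coefficient is ν = x/(1 + α·x) (with x = Δt·Sᵢⱼ·ηᵢ^q/ηⱼ^r). Then ν ≤ 1 if and only if x ≤ 1/(1−α). In particular, for α < 1 the boundedness condition ν ≤ 1 cannot be guaranteed for arbitrarily large x. -/
/-- In the worst case Sⱼᵢ = 0, the Method-1 transfer coefficient
ν = x/(1 + α·x) with α ∈ [0,1) satisfies ν ≤ 1 if and only if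
x ≤ 1/(1 − α); so boundedness cannot be guaranteed for large x. -/
theorem method1_boundedness_condition
    (α x : ℝ) (hα0 : 0 ≤ α) (hα1 : α < 1) (hx : 0 < x) :
    x / (1 + α * x) ≤ 1 ↔ x ≤ 1 / (1 - α) := by
  have hden : 0 < 1 + α * x := by nlinarith
  have h1a : 0 < 1 - α := by linarith
  rw [div_le_one hden, le_div_iff₀ h1a]
  constructor <;> intro h <;> nlinarith
end

section
/- (Kinetic energy identity for Method 2.) Let V be a real inner product space, let λ₀₁, λ₁₀ ∈ [0,1], let η₀, η₁ > 0 be real numbers with η₀' := (1−λ₀₁)·η₀ + λ₁₀·η₁ > 0 and η₁' := (1−λ₁₀)·η₁ + λ₀₁·η₀ > 0, and let u₀, u₁ ∈ V. Define u₀' = ((1−λ₀₁)·η₀·u₀ + λ₁₀·η₁·u₁)/η₀' and u₁' = ((1−λ₁₀)·η₁·u₁ + λ₀₁·η₀·u₀)/η₁'. Then ½·η₀'·‖u₀'‖² + ½·η₁'·‖u₁'‖² = ½·η₀·‖u₀‖² + ½·η₁·‖u₁‖² − ½·μ·‖u₀ − u₁‖², where μ = η₀·η₁·[(1−λ₀₁)·λ₀₁·η₀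 + (1−λ₁₀)·λ₁₀·η₁]/(η₀'·η₁'). -/
/-!
Each new phase velocity is the mass-weighted mean of the two old velocities, with the masses
a = (1 − λ₀₁)η₀, b = λ₁₀η₁ going into phase 0 and c = λ₀₁η₀, d = (1 − λ₁₀)η₁ into phase 1.
Merging masses a and b moving at u₀ and u₁ loses exactly the kinetic energy
½·(ab/(a + b))·‖u₀ − u₁‖² of a perfectly inelastic collision, and since a + c = η₀ and
b + d = η₁ the two losses add up to ½·μ·‖u₀ − u₁‖² with μ = ab/η₀' + cd/η₁'.
-/

section WeightedMean

variable {V : Type*} [NormedAddCommGroup V] [InnerProductSpace ℝ V]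

theorem norm_smul_add_smul_sq_add_mul_norm_sub_sq (a b : ℝ) (u v : V) :
    ‖a • u + b • v‖ ^ 2 + a * b * ‖u - v‖ ^ 2 = (a + b) * (a * ‖u‖ ^ 2 + b * ‖v‖ ^ 2) := by
  rw [norm_add_sq_real, norm_sub_sq_real, norm_smul, norm_smul, real_inner_smul_left,
    real_inner_smul_right, mul_pow, mul_pow, Real.norm_eq_abs, Real.norm_eq_abs, sq_abs, sq_abs]
  ring

theorem mul_norm_inv_smul_add_sq {m a b : ℝ} (hm : m = a + b) (hm0 : m ≠ 0) (u v : V) :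
    m * ‖m⁻¹ • (a • u + b • v)‖ ^ 2 = a * ‖u‖ ^ 2 + b * ‖v‖ ^ 2 - a * b / m * ‖u - v‖ ^ 2 := by
  have key := norm_smul_add_smul_sq_add_mul_norm_sub_sq a b u v
  rw [norm_smul, mul_pow, norm_inv, Real.norm_eq_abs, inv_pow, sq_abs]
  field_simp
  rw [← hm] at key
  linear_combination key

end WeightedMean

theorem method2_kinetic_energy_identity_general
    {V : Type*} [NormedAddCommGroup V] [InnerProductSpace ℝ V]
    (lam01 lam10 η0 η1 : ℝ)
    (η0' η1' : ℝ)
    (hη0' : η0' = (1 - lam01) * η0 + lam10 * η1)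
    (hη1' : η1' = (1 - lam10) * η1 + lam01 * η0)
    (hη0'pos : 0 < η0') (hη1'pos : 0 < η1')
    (u0 u1 u0' u1' : V)
    (hu0' : u0' = (η0'⁻¹) • ((1 - lam01) • (η0 • u0) + lam10 • (η1 • u1)))
    (hu1' : u1' = (η1'⁻¹) • ((1 - lam10) • (η1 • u1) + lam01 • (η0 • u0)))
    (μ : ℝ)
    (hμ : μ = η0 * η1 * ((1 - lam01) * lam01 * η0 + (1 - lam10) * lam10 * η1)
              / (η0' * η1')) :
    (1/2) * η0' * ‖u0'‖^2 + (1/2) * η1' * ‖u1'‖^2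
      = (1/2) * η0 * ‖u0‖^2 + (1/2) * η1 * ‖u1‖^2
        - (1/2) * μ * ‖u0 - u1‖^2 := by
  rw [smul_smul, smul_smul] at hu0' hu1'
  have energy0 := mul_norm_inv_smul_add_sq hη0' hη0'pos.ne' u0 u1
  have energy1 := mul_norm_inv_smul_add_sq hη1' hη1'pos.ne' u1 u0
  rw [← hu0'] at energy0
  rw [← hu1', norm_sub_rev] at energy1
  have hμ_split : μ = (1 - lam01) * η0 * (lam10 * η1) / η0'
      + (1 - lam10) * η1 * (lam01 * η0) / η1' := by
    rw [hμ]
    field_simp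
    rw [hη0', hη1']
    ring
  rw [hμ_split]
  linear_combination (1 / 2 : ℝ) * energy0 + (1 / 2 : ℝ) * energy1

/-- Kinetic energy identity for Method 2: the kinetic energy after the
mass-weighted transfer equals the old kinetic energy minus
½·μ·‖u₀ − u₁‖², where μ is an explicit nonnegative coefficient. -/
theorem method2_kinetic_energy_identity
    {V : Type*} [NormedAddCommGroup V] [InnerProductSpace ℝ V]
    (lam01 lam10 η0 η1 : ℝ)
    (h01l : 0 ≤ lam01) (h01u : lam01 ≤ 1)
    (h10l : 0 ≤ lam10) (h10u : lam10 ≤ 1)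
    (hη0 : 0 < η0) (hη1 : 0 < η1)
    (η0' η1' : ℝ)
    (hη0' : η0' = (1 - lam01) * η0 + lam10 * η1)
    (hη1' : η1' = (1 - lam10) * η1 + lam01 * η0)
    (hη0'pos : 0 < η0') (hη1'pos : 0 < η1')
    (u0 u1 u0' u1' : V)
    (hu0' : u0' = (η0'⁻¹) • ((1 - lam01) • (η0 • u0) + lam10 • (η1 • u1)))
    (hu1' : u1' = (η1'⁻¹) • ((1 - lam10) • (η1 • u1) + lam01 • (η0 • u0)))
    (μ : ℝ)
    (hμ : μ = η0 * η1 * ((1 - lam01) * lam01 * η0 + (1 - lam10) * lam10 * η1)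
              / (η0' * η1')) :
    (1/2) * η0' * ‖u0'‖^2 + (1/2) * η1' * ‖u1'‖^2
      = (1/2) * η0 * ‖u0‖^2 + (1/2) * η1 * ‖u1‖^2
        - (1/2) * μ * ‖u0 - u1‖^2 :=
  method2_kinetic_energy_identity_general lam01 lam10 η0 η1 η0' η1' hη0' hη1' hη0'pos hη1'pos u0 u1
    u0' u1' hu0' hu1' μ hμ
end

section
/- (Method 2 is kinetic-energy diminishing.) Let V be a real inner product space, let λ₀₁, λ₁₀ ∈ [0,1], let η₀, η₁ > 0 be real numbers with η₀' := (1−λ₀₁)·η₀ + λ₁₀·η₁ > 0 and η₁' := (1−λ₁₀)·η₁ + λ₀₁·η₀ > 0, and let u₀, u₁ ∈ V. Define u₀' = ((1−λ₀₁)·η₀·u₀ + λ₁₀·η₁·u₁)/η₀' and u₁' = ((1−λ₁₀)·η₁·u₁ + λ₀₁·η₀·u₀)/η₁'. Then ½·η₀'·‖u₀'‖² + ½·η₁'·‖u₁'‖² ≤ ½·η₀·‖u₀‖² + ½·η₁·‖u₁‖²; that is, the total kinetic energy never increases under the mass-weighted transfer update. -/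
/-!
Each new velocity is the mass-weighted average of the old velocities that end up in that fluid, and for
weights `a, b ≥ 0` one has the identity
`‖a • x + b • y‖² + a * b * ‖x - y‖² = (a + b) * (a * ‖x‖² + b * ‖y‖²)`.
Hence the kinetic energy of an averaged parcel is at most the sum of the kinetic energies of its
constituents, and summing over both fluids the constituents recombine to the original masses
`η₀` and `η₁`.
-/

section

variable {V : Type*} [NormedAddCommGroup V] [InnerProductSpace ℝ V]

theorem norm_smul_add_smul_sq_add_mul_mul_norm_sub_sq (a b : ℝ) (x y : V) :
    ‖a • x + b • y‖ ^ 2 + a * b * ‖x - y‖ ^ 2 = (a + b) * (a * ‖x‖ ^ 2 + b * ‖y‖ ^ 2) := by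
  rw [norm_add_sq_real, norm_sub_sq_real, norm_smul, norm_smul, real_inner_smul_left,
    real_inner_smul_right, mul_pow, mul_pow, Real.norm_eq_abs, Real.norm_eq_abs, sq_abs, sq_abs]
  ring

theorem add_mul_norm_inv_smul_sq_le {a b : ℝ} (ha : 0 ≤ a) (hb : 0 ≤ b) (x y : V) :
    (a + b) * ‖(a + b)⁻¹ • (a • x + b • y)‖ ^ 2 ≤ a * ‖x‖ ^ 2 + b * ‖y‖ ^ 2 := by
  have hmix := norm_smul_add_smul_sq_add_mul_mul_norm_sub_sq a b x y
  have hdiss : 0 ≤ a * b * ‖x - y‖ ^ 2 := by positivity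
  rw [norm_smul, mul_pow, Real.norm_eq_abs, sq_abs, ← mul_assoc, sq, ← mul_assoc]
  rcases (add_nonneg ha hb).eq_or_lt with hab | hab
  · rw [← hab, zero_mul, zero_mul, zero_mul]
    positivity
  · rw [mul_inv_cancel₀ hab.ne', one_mul, inv_mul_le_iff₀ hab]
    linarith

end

theorem method2_kinetic_energy_diminishing_general
    {V : Type*} [NormedAddCommGroup V] [InnerProductSpace ℝ V]
    (lam01 lam10 η0 η1 : ℝ)
    (h01l : 0 ≤ lam01) (h01u : lam01 ≤ 1)
    (h10l : 0 ≤ lam10) (h10u : lam10 ≤ 1)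
    (hη0 : 0 < η0) (hη1 : 0 < η1)
    (η0' η1' : ℝ)
    (hη0' : η0' = (1 - lam01) * η0 + lam10 * η1)
    (hη1' : η1' = (1 - lam10) * η1 + lam01 * η0)
    (u0 u1 u0' u1' : V)
    (hu0' : u0' = (η0'⁻¹) • ((1 - lam01) • (η0 • u0) + lam10 • (η1 • u1)))
    (hu1' : u1' = (η1'⁻¹) • ((1 - lam10) • (η1 • u1) + lam01 • (η0 • u0))) :
    (1/2) * η0' * ‖u0'‖^2 + (1/2) * η1' * ‖u1'‖^2
      ≤ (1/2) * η0 * ‖u0‖^2 + (1/2) * η1 * ‖u1‖^2 := by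
  rw [smul_smul, smul_smul] at hu0' hu1'
  subst hη0' hη1' hu0' hu1'
  have h0 := add_mul_norm_inv_smul_sq_le (mul_nonneg (sub_nonneg.2 h01u) hη0.le)
    (mul_nonneg h10l hη1.le) u0 u1
  have h1 := add_mul_norm_inv_smul_sq_le (mul_nonneg (sub_nonneg.2 h10u) hη1.le)
    (mul_nonneg h01l hη0.le) u1 u0
  linear_combination (h0 + h1) / 2

/-- Method 2 is kinetic-energy diminishing: the total kinetic energy never
increases under the mass-weighted transfer update. -/
theorem method2_kinetic_energy_diminishing
    {V : Type*} [NormedAddCommGroup V] [InnerProductSpace ℝ V]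
    (lam01 lam10 η0 η1 : ℝ)
    (h01l : 0 ≤ lam01) (h01u : lam01 ≤ 1)
    (h10l : 0 ≤ lam10) (h10u : lam10 ≤ 1)
    (hη0 : 0 < η0) (hη1 : 0 < η1)
    (η0' η1' : ℝ)
    (hη0' : η0' = (1 - lam01) * η0 + lam10 * η1)
    (hη1' : η1' = (1 - lam10) * η1 + lam01 * η0)
    (hη0'pos : 0 < η0') (hη1'pos : 0 < η1')
    (u0 u1 u0' u1' : V)
    (hu0' : u0' = (η0'⁻¹) • ((1 - lam01) • (η0 • u0) + lam10 • (η1 • u1)))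
    (hu1' : u1' = (η1'⁻¹) • ((1 - lam10) • (η1 • u1) + lam01 • (η0 • u0))) :
    (1/2) * η0' * ‖u0'‖^2 + (1/2) * η1' * ‖u1'‖^2
      ≤ (1/2) * η0 * ‖u0‖^2 + (1/2) * η1 * ‖u1‖^2 :=
  method2_kinetic_energy_diminishing_general lam01 lam10 η0 η1 h01l h01u h10l h10u hη0 hη1 η0' η1'
    hη0' hη1' u0 u1 u0' u1' hu0' hu1'
end

section
/- (Symmetry and positivity of the Method-2 kinetic-energy coefficient.) Let λ₀₁, λ₁₀ ∈ [0,1] and η₀, η₁ > 0 be real numbers with η₀' := (1−λ₀₁)·η₀ + λ₁₀·η₁ > 0 and η₁' := (1−λ₁₀)·η₁ + λ₀₁·η₀ > 0. Define β₁₀ = λ₁₀·η₁/η₀', β₀₁ = λ₀₁·η₀/η₁', and μᵢⱼ = [λᵢⱼ·(1 − βᵢⱼ − βⱼᵢ) + βⱼᵢ]·ηᵢ for (i,j) ∈ {(0,1),(1,0)}. Then μ₀₁ = μ₁₀ = η₀·η₁·[(1−λ₀₁)·λ₀₁·η₀ + (1−λ₁₀)·λ₁₀·η₁]/(η₀'·η₁'),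 and this common value is nonnegative. -/
/-- The Method-2 kinetic-energy coefficients μ₀₁ and μ₁₀ coincide, equal the
explicit symmetric expression, and are nonnegative. -/
theorem method2_mu_symmetric_nonneg
    (lam01 lam10 η0 η1 : ℝ)
    (h01l : 0 ≤ lam01) (h01u : lam01 ≤ 1)
    (h10l : 0 ≤ lam10) (h10u : lam10 ≤ 1)
    (hη0 : 0 < η0) (hη1 : 0 < η1)
    (η0' η1' : ℝ)
    (hη0' : η0' = (1 - lam01) * η0 + lam10 * η1)
    (hη1' : η1' = (1 - lam10) * η1 + lam01 * η0)
    (hη0'pos : 0 < η0') (hη1'pos : 0 < η1')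
    (β10 β01 : ℝ)
    (hβ10 : β10 = lam10 * η1 / η0')
    (hβ01 : β01 = lam01 * η0 / η1')
    (μ01 μ10 : ℝ)
    (hμ01 : μ01 = (lam01 * (1 - β01 - β10) + β10) * η0)
    (hμ10 : μ10 = (lam10 * (1 - β10 - β01) + β01) * η1) :
    μ01 = η0 * η1 * ((1 - lam01) * lam01 * η0 + (1 - lam10) * lam10 * η1)
            / (η0' * η1') ∧
    μ10 = η0 * η1 * ((1 - lam01) * lam01 * η0 + (1 - lam10) * lam10 * η1)
            / (η0' * η1') ∧
    0 ≤ η0 * η1 * ((1 - lam01) * lam01 * η0 + (1 - lam10) * lam10 * η1)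
          / (η0' * η1') := by
  have h0 : η0' ≠ 0 := ne_of_gt hη0'pos
  have h1 : η1' ≠ 0 := ne_of_gt hη1'pos
  refine ⟨?_, ?_, ?_⟩
  · subst hμ01 hβ10 hβ01
    field_simp
    subst hη0' hη1'
    ring
  · subst hμ10 hβ10 hβ01
    field_simp
    subst hη0' hη1'
    ring
  · apply div_nonneg
    · have := mul_nonneg (mul_nonneg (sub_nonneg.2 h01u) h01l) hη0.le
      have := mul_nonneg (mul_nonneg (sub_nonneg.2 h10u) h10l) hη1.le
      positivity
    · positivity
end

section
/- (General kinetic-energy change identity.) Let V be a real inner product space, let η₀, η₁, λ₀₁, λ₁₀, β₀₁, β₁₀ be real numbers and u₀, u₁ ∈ V. Set F₀ = η₀·u₀, F₁ = η₁·u₁, F₀' = (1−λ₀₁)·F₀ + λ₁₀·F₁, F₁' = (1−λ₁₀)·F₁ + λ₀₁·F₀, u₀' = (1−β₁₀)·u₀ + β₁₀·u₁ and u₁' = (1−β₀₁)·u₁ + β₀₁·u₀. Then ½·⟨u₀', F₀'⟩ + ½·⟨u₁', F₁'⟩ = ½·⟨u₀, F₀⟩ + ½·⟨u₁, F₁⟩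 − ΔK, where ΔK = ½·⟨u₀ − u₁, μ₀₁·u₀ − μ₁₀·u₁⟩ and μᵢⱼ = [λᵢⱼ·(1 − βᵢⱼ − βⱼᵢ) + βⱼᵢ]·ηᵢ. -/
open RealInnerProductSpace

/-- General kinetic-energy change identity for a momentum-conserving
two-fluid transfer update: the new kinetic energy equals the old one minus
ΔK = ½⟨u₀ − u₁, μ₀₁u₀ − μ₁₀u₁⟩ with μᵢⱼ = [λᵢⱼ(1−βᵢⱼ−βⱼᵢ)+βⱼᵢ]ηᵢ. -/
theorem kinetic_energy_change_identity
    {V : Type*} [NormedAddCommGroup V] [InnerProductSpace ℝ V]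
    (η0 η1 lam01 lam10 β01 β10 : ℝ) (u0 u1 : V)
    (F0 F1 F0' F1' : V) (u0' u1' : V)
    (hF0 : F0 = η0 • u0) (hF1 : F1 = η1 • u1)
    (hF0' : F0' = (1 - lam01) • F0 + lam10 • F1)
    (hF1' : F1' = (1 - lam10) • F1 + lam01 • F0)
    (hu0' : u0' = (1 - β10) • u0 + β10 • u1)
    (hu1' : u1' = (1 - β01) • u1 + β01 • u0)
    (μ01 μ10 : ℝ)
    (hμ01 : μ01 = (lam01 * (1 - β01 - β10) + β10) * η0)
    (hμ10 : μ10 = (lam10 * (1 - β10 - β01) + β01) * η1)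
    (ΔK : ℝ)
    (hΔK : ΔK = (1/2) * ⟪u0 - u1, μ01 • u0 - μ10 • u1⟫) :
    (1/2) * ⟪u0', F0'⟫ + (1/2) * ⟪u1', F1'⟫
      = (1/2) * ⟪u0, F0⟫ + (1/2) * ⟪u1, F1⟫ - ΔK := by
  subst hF0 hF1 hF0' hF1' hu0' hu1' hμ01 hμ10 hΔK
  simp only [inner_add_left, inner_add_right, inner_sub_left, inner_sub_right,
    real_inner_smul_left, real_inner_smul_right, real_inner_comm u1 u0]
  ring
end
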